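/- The Lovász number is an upper bound on the independence number: for every finite simple graph G, α(G) ≤ ϑ(G). -/

import Mathlib

open Finset

namespace SimpleGraph

variable {V W : Type*}

/-- The strong graph product. -/
def strongProd (G : SimpleGraph V) (H : SimpleGraph W) : SimpleGraph (V × W) where
  Adj x y := x ≠ y ∧ (x.1 = y.1 ∨ G.Adj x.1 y.1) ∧ (x.2 = y.2 ∨ H.Adj x.2 y.2)
  symm := by
    constructor
    rintro x y ⟨hne, h1, h2⟩
    exact ⟨hne.symm, h1.imp Eq.symm (fun h => G.adj_symm h), h2.imp Eq.symm (fun h => H.adj_symm h)⟩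
  loopless := by constructor; rintro x ⟨hne, -, -⟩; exact hne rfl

/-- The disjunctive graph product. -/
def disjProd (G : SimpleGraph V) (H : SimpleGraph W) : SimpleGraph (V × W) where
  Adj x y := G.Adj x.1 y.1 ∨ H.Adj x.2 y.2
  symm := ⟨fun _ _ h => h.imp (fun h => G.adj_symm h) (fun h => H.adj_symm h)⟩
  loopless := ⟨fun x h => h.elim (G.irrefl (v := x.1)) (H.irrefl (v := x.2))⟩

/-- A finite set of vertices is independent if no two of its members are adjacent. -/
def IsIndep (G : SimpleGraph V) (s : Finset V) : Prop :=
  ∀ ⦃v⦄, v ∈ s → ∀ ⦃w⦄, w ∈ s → ¬ G.Adj v w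

/-- The independence number. -/
noncomputable def alpha (G : SimpleGraph V) [Fintype V] : ℕ :=
  sSup {n | ∃ s : Finset V, G.IsIndep s ∧ s.card = n}

/-- The fractional packing number. -/
noncomputable def alphaStar (G : SimpleGraph V) [Fintype V] : ℝ :=
  sSup {x | ∃ t : V → ℝ, (∀ v, 0 ≤ t v) ∧
    (∀ C : Finset V, G.IsClique (C : Set V) → ∑ v ∈ C, t v ≤ 1) ∧ x = ∑ v, t v}

/-- The Lovász number. -/
noncomputable def lovTheta (G : SimpleGraph V) [Fintype V] : ℝ :=
  sSup {x | ∃ B : Matrix V V ℝ, B.PosSemidef ∧ B.trace = 1 ∧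
    (∀ v w, G.Adj v w → B v w = 0) ∧ x = ∑ v, ∑ w, B v w}

/-- Schrijver's variant of the Lovász number. -/
noncomputable def thetaMinus (G : SimpleGraph V) [Fintype V] : ℝ :=
  sSup {x | ∃ B : Matrix V V ℝ, B.PosSemidef ∧ B.trace = 1 ∧ (∀ v w, 0 ≤ B v w) ∧
    (∀ v w, G.Adj v w → B v w = 0) ∧ x = ∑ v, ∑ w, B v w}

/-- Szegedy's variant of the Lovász number. -/
noncomputable def thetaPlus (G : SimpleGraph V) [Fintype V] : ℝ :=
  sSup {x | ∃ B : Matrix V V ℝ, B.PosSemidef ∧ B.trace = 1 ∧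
    (∀ v w, G.Adj v w → B v w ≤ 0) ∧ x = ∑ v, ∑ w, B v w}

/-- The clique covering number. -/
noncomputable def cliqueCoverNum (G : SimpleGraph V) [Fintype V] : ℕ :=
  sInf {n | ∃ C : Fin n → Finset V, (∀ i, G.IsClique (C i : Set V)) ∧ ∀ v, ∃ i, v ∈ C i}

/-- The blow-up of a graph along integer vertex weights. -/
def blup (G : SimpleGraph V) (p : V → ℕ) : SimpleGraph (Σ v, Fin (p v)) where
  Adj x y := G.Adj x.1 y.1
  symm := ⟨fun _ _ h => G.adj_symm h⟩
  loopless := ⟨fun x h => G.irrefl (v := x.1) h⟩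

/-- The weighted independence number (integer weights). -/
noncomputable def alphaWNat (G : SimpleGraph V) [Fintype V] (p : V → ℕ) : ℕ :=
  sSup {n | ∃ s : Finset V, G.IsIndep s ∧ n = ∑ v ∈ s, p v}

/-- The weighted independence number (real weights). -/
noncomputable def alphaW (G : SimpleGraph V) [Fintype V] (p : V → ℝ) : ℝ :=
  sSup {x | ∃ s : Finset V, G.IsIndep s ∧ x = ∑ v ∈ s, p v}

end SimpleGraph

open SimpleGraph
open scoped RealInnerProductSpace

/-!
An independent set `s` with indicator vector `χ` gives the feasible matrix `|s|⁻¹ χ χᵀ`, whose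
entry sum is `|s|`. Since `sSup` of a set of reals that is not bounded above is `0`, one also
needs a bound on the feasible values: for positive semidefinite `B`, `2 B v w ≤ B v v + B w w`,
so the entry sum of `B` is at most `|V| · tr B`.
-/

namespace Matrix.PosSemidef

variable {n : Type*} [Fintype n] {B : Matrix n n ℝ}

theorem two_mul_apply_le [DecidableEq n] (hB : B.PosSemidef) (v w : n) :
    2 * B v w ≤ B v v + B w w := by
  have hsymm : B w v = B v w := by simpa using hB.isHermitian.apply v w
  have h := hB.dotProduct_mulVec_nonneg (Pi.single v 1 - Pi.single w 1)
  simp only [star_trivial, mulVec_sub, mulVec_single, dotProduct_sub, sub_dotProduct,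
    single_dotProduct, one_mul, MulOpposite.op_one, one_smul, col_apply] at h
  linarith

theorem sum_apply_nonneg (hB : B.PosSemidef) : 0 ≤ ∑ v, ∑ w, B v w := by
  simpa [dotProduct, mulVec] using hB.dotProduct_mulVec_nonneg 1

theorem sum_apply_le_card_mul_trace (hB : B.PosSemidef) :
    ∑ v, ∑ w, B v w ≤ Fintype.card n * B.trace := by
  classical
  have hdiag : ∑ v : n, ∑ w : n, (B v v + B w w) = 2 * (Fintype.card n * B.trace) := by
    simp only [sum_add_distrib, sum_const, card_univ, nsmul_eq_mul, ← mul_sum, trace, diag]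
    ring
  have h2 : 2 * ∑ v, ∑ w, B v w ≤ ∑ v : n, ∑ w : n, (B v v + B w w) := by
    simp only [mul_sum]
    exact sum_le_sum fun v _ => sum_le_sum fun w _ => hB.two_mul_apply_le v w
  linarith

end Matrix.PosSemidef

namespace SimpleGraph

variable {V : Type*} [Fintype V] {G : SimpleGraph V}

theorem le_lovTheta {B : Matrix V V ℝ} (hB : B.PosSemidef) (htr : B.trace = 1)
    (hadj : ∀ v w, G.Adj v w → B v w = 0) : ∑ v, ∑ w, B v w ≤ G.lovTheta := by
  refine le_csSup ⟨Fintype.card V, ?_⟩ ⟨B, hB, htr, hadj, rfl⟩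
  rintro x ⟨B', hB', htr', -, rfl⟩
  simpa [htr'] using hB'.sum_apply_le_card_mul_trace

theorem lovTheta_nonneg : 0 ≤ G.lovTheta :=
  Real.sSup_nonneg <| by
    rintro x ⟨B, hB, -, -, rfl⟩
    exact hB.sum_apply_nonneg

theorem IsIndep.card_le_lovTheta {s : Finset V} (hs : G.IsIndep s) :
    (s.card : ℝ) ≤ G.lovTheta := by
  classical
  rcases s.eq_empty_or_nonempty with rfl | hne
  · simpa using lovTheta_nonneg
  set χ : V → ℝ := fun v => if v ∈ s then 1 else 0
  have hcard : (s.card : ℝ) ≠ 0 := by exact_mod_cast hne.card_pos.ne'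
  have hχ : ∑ v, χ v = s.card := by simp [χ]
  have hχχ : χ ⬝ᵥ χ = s.card := by simp [χ, dotProduct]
  let B : Matrix V V ℝ := (s.card : ℝ)⁻¹ • Matrix.vecMulVec χ χ
  have hB : B.PosSemidef := by
    simpa using (Matrix.posSemidef_vecMulVec_self_star χ).smul (inv_nonneg.2 s.card.cast_nonneg)
  have htr : B.trace = 1 := by simp [B, hχχ, hcard]
  have hadj : ∀ v w, G.Adj v w → B v w = 0 := by
    intro v w h
    refine mul_eq_zero_of_right _ ?_
    by_cases hv : v ∈ s
    · have hw : w ∉ s := fun hw => hs hv hw h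
      simp [χ, Matrix.vecMulVec_apply, hw]
    · simp [χ, Matrix.vecMulVec_apply, hv]
  have hsum : ∑ v, ∑ w, B v w = s.card := by
    simp only [B, Matrix.smul_apply, Matrix.vecMulVec_apply, smul_eq_mul, ← mul_sum, ← sum_mul, hχ]
    field_simp
  exact hsum ▸ le_lovTheta hB htr hadj

theorem exists_isIndep_card_eq_alpha : ∃ s : Finset V, G.IsIndep s ∧ s.card = G.alpha :=
  Nat.sSup_mem (s := {n | ∃ s : Finset V, G.IsIndep s ∧ s.card = n})
    ⟨0, ∅, by simp [IsIndep], rfl⟩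
    ⟨Fintype.card V, by rintro _ ⟨s, -, rfl⟩; exact s.card_le_univ⟩

end SimpleGraph

theorem alpha_le_lovTheta {V : Type*} [Fintype V] (G : SimpleGraph V) :
    (G.alpha : ℝ) ≤ G.lovTheta := by
  obtain ⟨s, hs, hcard⟩ := G.exists_isIndep_card_eq_alpha
  exact hcard ▸ hs.card_le_lovTheta
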